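/- Let n ≥ 1, let L be a first-order language, M an L-structure, and φ(y_0,…,y_{n-1},x) an L-formula with n+1 variable groups. For σ ∈ Sym({0,…,n}) let φ_σ(z_0,…,z_n) := φ(y^0_{σ(0)},…,y^{n-1}_{σ(n-1)}, x_{σ(n)}), where z_i = (y^0_i,…,y^{n-1}_i, x_i), and let ψ_φ := ⋁_{σ} φ_σ. If ψ_φ encodes every finite (n+1)-partite (n+1)-uniform hypergraph in M (part P_i plugged into group z_i), then there exists a permutation σ ∈ Sym({0,…,n}) such that φ_σ encodes every finite (n+1)-partite (n+1)-uniform hypergraph in M. -/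

import Mathlib

open FirstOrder Language

universe u x y z

/-- An `(n+1)`-partite `(n+1)`-uniform hypergraph, presented by its parts and its set of
(cross) edges. -/
structure PartiteHG (n : ℕ) : Type (u + 1) where
  P : Fin (n + 1) → Type u
  E : (∀ i, P i) → Prop

/-- Finite disjunction of a list of formulas. -/
def bigOr {L : FirstOrder.Language.{x, y}} {α : Type*} : List (L.Formula α) → L.Formula α
  | [] => BoundedFormula.falsum
  | χ :: l => χ.not.imp (bigOr l)

/-- The relabeling of the variables of `φ(y₀, …, y_{n-1}, x)` corresponding to the substitution
`φ(y⁰_{σ 0}, …, y^{n-1}_{σ (n-1)}, x_{σ n})`, where `z i = (y⁰_i, …, y^{n-1}_i, x_i)` is the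
`i`-th of the `n+1` new variable groups. -/
def groupMap {n d₀ : ℕ} {d : Fin n → ℕ} (σ : Equiv.Perm (Fin (n + 1))) :
    ((Σ j : Fin n, Fin (d j)) ⊕ Fin d₀) →
      Fin (n + 1) × ((Σ j : Fin n, Fin (d j)) ⊕ Fin d₀)
  | Sum.inl p => (σ p.1.castSucc, Sum.inl p)
  | Sum.inr k => (σ (Fin.last n), Sum.inr k)

/-- The formula `φ_σ(z₀, …, z_n) = φ(y⁰_{σ 0}, …, y^{n-1}_{σ (n-1)}, x_{σ n})`. -/
def phiSigma {L : FirstOrder.Language.{x, y}} {n d₀ : ℕ} {d : Fin n → ℕ}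
    (φ : L.Formula ((Σ j : Fin n, Fin (d j)) ⊕ Fin d₀)) (σ : Equiv.Perm (Fin (n + 1))) :
    L.Formula (Fin (n + 1) × ((Σ j : Fin n, Fin (d j)) ⊕ Fin d₀)) :=
  Formula.relabel (groupMap σ) φ

/-- The symmetrization `ψ_φ(z₀, …, z_n) = ⋁_{σ ∈ Sym(n+1)} φ_σ(z₀, …, z_n)`. -/
noncomputable def psiPhi {L : FirstOrder.Language.{x, y}} {n d₀ : ℕ} {d : Fin n → ℕ}
    (φ : L.Formula ((Σ j : Fin n, Fin (d j)) ⊕ Fin d₀)) :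
    L.Formula (Fin (n + 1) × ((Σ j : Fin n, Fin (d j)) ⊕ Fin d₀)) :=
  bigOr (((Finset.univ : Finset (Equiv.Perm (Fin (n + 1)))).toList).map (phiSigma φ))

/-- A formula `ψ(z₀, …, z_n)` with `n+1` variable groups, each a copy of `V`, encodes the
partite hypergraph `H` in `M` (part `P i` plugged into group `z i`). -/
def EncodesV (L : FirstOrder.Language.{x, y}) (M : Type z) [L.Structure M] {n : ℕ}
    {V : Type*} (ψ : L.Formula (Fin (n + 1) × V)) (H : PartiteHG.{u} n) : Prop :=
  ∃ a : (i : Fin (n + 1)) → H.P i → V → M,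
    ∀ g : ∀ i, H.P i, ((ψ.Realize fun p => a p.1 (g p.1) p.2) ↔ H.E g)

/-!
By Hales–Jewett, if `ψ_φ` encodes a high power `H^ι` of a finite hypergraph `H` (a hyperedge
of `H^ι` is a tuple all of whose coordinate slices are hyperedges of `H`), then a single `φ_σ`
encodes `H`: colour each word `w : ι → E(H)` by a disjunct `φ_σ` that holds on the hyperedge of
`H^ι` spelled by `w`; the vertex maps given by a monochromatic combinatorial line embed `H` into
`H^ι` as an induced subhypergraph whose hyperedges all satisfy that one `φ_σ`. As there are only
finitely many `σ`, applying this to the disjoint union of one counterexample for each `σ` gives a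
contradiction.
-/

section RelEncodes

variable {n : ℕ} {X : Type*}

def RelEncodes (R : (Fin (n + 1) → X) → Prop) (H : PartiteHG.{u} n) : Prop :=
  ∃ a : ∀ i, H.P i → X, ∀ g : ∀ i, H.P i, R (fun i => a i (g i)) ↔ H.E g

theorem RelEncodes.comap {R : (Fin (n + 1) → X) → Prop} {H H' : PartiteHG.{u} n}
    (f : ∀ i, H.P i → H'.P i) (hf : ∀ g, H'.E (fun i => f i (g i)) ↔ H.E g)
    (hR : RelEncodes R H') : RelEncodes R H := by
  obtain ⟨a, ha⟩ := hR
  exact ⟨fun i => a i ∘ f i, fun g => (ha _).trans (hf g)⟩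

end RelEncodes

namespace PartiteHG

variable {n : ℕ}

def pow (H : PartiteHG.{u} n) (ι : Type) : PartiteHG.{u} n where
  P i := ι → H.P i
  E g := ∀ t, H.E fun i => g i t

def sigma {C : Type} (H : C → PartiteHG.{u} n) : PartiteHG.{u} n where
  P i := Σ c, (H c).P i
  E g := ∃ c, ∃ h : ∀ i, (H c).P i, (fun i => (⟨c, h i⟩ : Σ c, (H c).P i)) = g ∧ (H c).E h

theorem sigma_edge_mk_iff {C : Type} {H : C → PartiteHG.{u} n} {c : C} (g : ∀ i, (H c).P i) :
    (sigma H).E (fun i => ⟨c, g i⟩) ↔ (H c).E g := by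
  refine ⟨?_, fun hg => ⟨c, g, rfl, hg⟩⟩
  rintro ⟨c', h, hhg, hh⟩
  obtain rfl : c' = c := congrArg Sigma.fst (congrFun hhg 0)
  obtain rfl : h = g :=
    funext fun i => sigma_mk_injective (β := fun c => (H c).P i) (congrFun hhg i)
  exact hh

open Combinatorics

variable {H : PartiteHG.{u} n} {ι : Type}

def lineMap (l : Line {e // H.E e} ι) (i : Fin (n + 1)) : H.P i → (H.pow ι).P i :=
  l.map fun e => e.1 i

theorem lineMap_apply_edge (l : Line {e // H.E e} ι) {g : ∀ i, H.P i} (hg : H.E g)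
    (i : Fin (n + 1)) : lineMap l i (g i) = fun t => (l ⟨g, hg⟩ t).1 i :=
  Line.map_apply (fun e : {e // H.E e} => e.1 i) l ⟨g, hg⟩

theorem pow_edge_lineMap_iff (l : Line {e // H.E e} ι) (g : ∀ i, H.P i) :
    (H.pow ι).E (fun i => lineMap l i (g i)) ↔ H.E g := by
  refine ⟨fun hg => ?_, fun hg t => ?_⟩
  · -- at a coordinate where `l` is not constant, the slice of `lineMap l ∘ g` is `g` itself
    obtain ⟨t, ht⟩ := l.proper
    convert hg t using 1
    funext i
    exact (Line.apply_none _ _ _ (by simp [Line.map, ht])).symm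
  · simp only [lineMap_apply_edge l hg]
    exact (l ⟨g, hg⟩ t).2

end PartiteHG

section Encodes

open PartiteHG Combinatorics

variable {n : ℕ} {X : Type*}

theorem exists_relEncodes_of_relEncodes_pow {C : Type*} [Finite C]
    {S : C → (Fin (n + 1) → X) → Prop} (H : PartiteHG.{u} n) (hfin : ∀ i, Finite (H.P i))
    (hpow : ∀ (ι : Type) [Fintype ι], RelEncodes (fun z => ∃ c, S c z) (H.pow ι)) :
    ∃ c, RelEncodes (S c) H := by
  have := hfin
  obtain ⟨ι, _, hHJ⟩ := Line.exists_mono_in_high_dimension {e // H.E e} C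
  obtain ⟨a, ha⟩ := hpow ι
  have colour (w : ι → {e // H.E e}) : ∃ c, S c fun i => a i fun t => (w t).1 i :=
    (ha _).2 fun t => (w t).2
  choose col hcol using colour
  obtain ⟨l, c, hl⟩ := hHJ col
  refine ⟨c, fun i v => a i (lineMap l i v), fun g => ⟨fun hS => ?_, fun hg => ?_⟩⟩
  · exact (pow_edge_lineMap_iff l g).1 ((ha _).1 ⟨c, hS⟩)
  · have hcol := hcol (l ⟨g, hg⟩)
    rw [hl] at hcol
    simpa only [lineMap_apply_edge l hg] using hcol

theorem exists_forall_relEncodes {C : Type} [Finite C]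
    {S : C → (Fin (n + 1) → X) → Prop}
    (h : ∀ H : PartiteHG.{u} n, (∀ i, Finite (H.P i)) → ∃ c, RelEncodes (S c) H) :
    ∃ c, ∀ H : PartiteHG.{u} n, (∀ i, Finite (H.P i)) → RelEncodes (S c) H := by
  by_contra! hcon
  choose H hHfin hH using hcon
  obtain ⟨c, hc⟩ := h (sigma H) fun i => by
    have := fun c => hHfin c i
    exact (inferInstance : Finite (Σ c, (H c).P i))
  exact hH c (hc.comap (fun i v => (⟨c, v⟩ : Σ c, (H c).P i)) sigma_edge_mk_iff)

end Encodes

theorem realize_bigOr {L : FirstOrder.Language.{x, y}} {M : Type z} [L.Structure M] {α : Type*}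
    (l : List (L.Formula α)) (v : α → M) :
    (bigOr l).Realize v ↔ ∃ χ ∈ l, χ.Realize v := by
  induction l with
  | nil => exact ⟨fun h => h.elim, by simp⟩
  | cons χ l ih =>
    simp only [bigOr, Formula.realize_imp, Formula.realize_not, ih, List.mem_cons,
      exists_eq_or_imp]
    tauto

theorem realize_psiPhi {L : FirstOrder.Language.{x, y}} {M : Type z} [L.Structure M]
    {n d₀ : ℕ} {d : Fin n → ℕ} (φ : L.Formula ((Σ j : Fin n, Fin (d j)) ⊕ Fin d₀))
    (v : Fin (n + 1) × ((Σ j : Fin n, Fin (d j)) ⊕ Fin d₀) → M) :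
    (psiPhi φ).Realize v ↔ ∃ σ, (phiSigma φ σ).Realize v := by
  simp [psiPhi, realize_bigOr]

theorem psi_encodes_implies_phiSigma_encodes_general {n : ℕ}
    {L : FirstOrder.Language.{x, y}} {M : Type z} [L.Structure M]
    {d₀ : ℕ} {d : Fin n → ℕ} (φ : L.Formula ((Σ j : Fin n, Fin (d j)) ⊕ Fin d₀))
    (hψ : ∀ H : PartiteHG.{u} n, (∀ i, Finite (H.P i)) → EncodesV L M (psiPhi φ) H) :
    ∃ σ : Equiv.Perm (Fin (n + 1)),
      ∀ H : PartiteHG.{u} n, (∀ i, Finite (H.P i)) → EncodesV L M (phiSigma φ σ) H := by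
  have hψσ : (fun z : Fin (n + 1) → _ → M => (psiPhi φ).Realize fun p => z p.1 p.2) =
      fun z => ∃ σ, (phiSigma φ σ).Realize fun p => z p.1 p.2 :=
    funext fun z => propext (realize_psiPhi φ _)
  refine exists_forall_relEncodes
    (S := fun σ (z : Fin (n + 1) → _ → M) => (phiSigma φ σ).Realize fun p => z p.1 p.2)
    fun H hfin => exists_relEncodes_of_relEncodes_pow H hfin fun ι _ => ?_
  rw [← hψσ]
  exact hψ (H.pow ι) fun i => have := hfin i; show Finite (ι → H.P i) from inferInstance

/-- If the symmetrization `ψ_φ` of `φ(y₀, …, y_{n-1}, x)` encodes every finite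
`(n+1)`-partite `(n+1)`-uniform hypergraph in `M`, then already some single `φ_σ` encodes
every finite `(n+1)`-partite `(n+1)`-uniform hypergraph in `M`. -/
theorem psi_encodes_implies_phiSigma_encodes {n : ℕ} (hn : 1 ≤ n)
    {L : FirstOrder.Language.{x, y}} {M : Type z} [L.Structure M]
    {d₀ : ℕ} {d : Fin n → ℕ} (φ : L.Formula ((Σ j : Fin n, Fin (d j)) ⊕ Fin d₀))
    (hψ : ∀ H : PartiteHG.{u} n, (∀ i, Finite (H.P i)) → EncodesV L M (psiPhi φ) H) :
    ∃ σ : Equiv.Perm (Fin (n + 1)),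
      ∀ H : PartiteHG.{u} n, (∀ i, Finite (H.P i)) → EncodesV L M (phiSigma φ σ) H :=
  psi_encodes_implies_phiSigma_encodes_general φ hψ
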